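/- arXiv:2303.15459 — 3 statements merged into one kernel-verified Lean document; each statement's English description precedes it below -/
import Mathlib

section
/- Let real numbers p11, p22, p12, λ, d11, d22, ds, f satisfy the Lagrange multiplier system, and set δ_s = d11·d22 − ds². Then λ satisfies the quartic equation f²·(λ²−1)² + δ_s·(λ+1)² − (d11+d22)²·λ = 0. -/
/-!
Writing `P = !![p11, p12; p12, p22]`, the Lagrange system says exactly that
`D = !![d11, ds; ds, d22]` equals `P + λ • adj P` (the gradient of `det` at `P` is `adj P`).
For any `2 × 2` matrix, `tr (P + λ • adj P) = (1 + λ) tr P` and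
`det (P + λ • adj P) = λ (tr P)² + (1 - λ)² det P`.
Multiplying the second identity by `(1 + λ)²` and substituting the first one and
`det P = -f²` eliminates `P` and leaves the quartic in `λ`.
-/

namespace Matrix

variable {R : Type*} [CommRing R]

theorem trace_add_smul_adjugate_fin_two (c : R) (A : Matrix (Fin 2) (Fin 2) R) :
    (A + c • A.adjugate).trace = (1 + c) * A.trace := by
  rw [A.eta_fin_two, adjugate_fin_two_of]
  simp only [trace_fin_two, add_apply, smul_apply, of_apply, cons_val', cons_val_zero,
    cons_val_one, empty_val', cons_val_fin_one, smul_eq_mul]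
  ring

theorem det_add_smul_adjugate_fin_two (c : R) (A : Matrix (Fin 2) (Fin 2) R) :
    (A + c • A.adjugate).det = c * A.trace ^ 2 + (1 - c) ^ 2 * A.det := by
  rw [A.eta_fin_two, adjugate_fin_two_of]
  simp only [det_fin_two, trace_fin_two, add_apply, smul_apply, of_apply, cons_val',
    cons_val_zero, cons_val_one, empty_val', cons_val_fin_one, smul_eq_mul]
  ring

end Matrix

/-- The Lagrange multiplier `λ` satisfies the quartic
`f²·(λ²−1)² + δ_s·(λ+1)² − (d11+d22)²·λ = 0`, where `δ_s = d11·d22 − ds²`. -/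
theorem lambda_quartic (p11 p22 p12 lam d11 d22 ds f : ℝ)
    (h1 : p11 + lam * p22 = d11)
    (h2 : lam * p11 + p22 = d22)
    (h3 : (1 - lam) * p12 = ds)
    (h4 : p11 * p22 - p12 ^ 2 = -f ^ 2) :
    f ^ 2 * (lam ^ 2 - 1) ^ 2 + (d11 * d22 - ds ^ 2) * (lam + 1) ^ 2
      - (d11 + d22) ^ 2 * lam = 0 := by
  set P : Matrix (Fin 2) (Fin 2) ℝ := !![p11, p12; p12, p22]
  have hD : P + lam • P.adjugate = !![d11, ds; ds, d22] := by
    rw [Matrix.adjugate_fin_two_of, ← h1, ← h2, ← h3]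
    ext i j
    fin_cases i <;> fin_cases j <;> simp [P] <;> ring
  have htrace := Matrix.trace_add_smul_adjugate_fin_two lam P
  have hdet := Matrix.det_add_smul_adjugate_fin_two lam P
  rw [hD] at htrace hdet
  simp only [Matrix.trace_fin_two_of, Matrix.det_fin_two_of, P] at htrace hdet
  linear_combination (lam + 1) ^ 2 * hdet + (lam + 1) ^ 2 * (1 - lam) ^ 2 * h4
    - lam * (d11 + d22 + (1 + lam) * (p11 + p22)) * htrace
end

section
/- Let d, ds, f be real numbers with f > 0 and (d, ds) ≠ (0, 0), and set R = √(d² + ds²). Let ε = 1 or ε = −1, and define λ = 1 + ε·R/f, p11 = −ε·d·f/R, p22 = −p11, p12 = −ε·ds·f/R. Then p11, p22, p12, λ satisfy the Lagrange multiplier system with data d11 = d, d22 = −d, ds, f; in particular p11·p22 − p12² = −f². (These are the two additional real solutions in Case 2 with λ ≠ ±1.) -/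
/-!
With `λ = 1 + εR/f` and `p₂₂ = -p₁₁`, the first three equations reduce to
`(1 - λ) p = (d, ds)`, which holds because `(1 - λ)(-εf/R) = ε² = 1`; the constraint
`p₁₁p₂₂ - p₁₂² = -(p₁₁² + p₁₂²) = -ε²f²(d² + ds²)/R²` equals `-f²` because `R² = d² + ds²`.
-/

section

variable {K : Type*} [Field K]

def IsLagrangeSolution (d11 d22 ds f p11 p22 p12 lam : K) : Prop :=
  p11 + lam * p22 = d11 ∧ lam * p11 + p22 = d22 ∧ (1 - lam) * p12 = ds ∧
    p11 * p22 - p12 ^ 2 = -f ^ 2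

theorem isLagrangeSolution_antidiagonal {d ds f eps R p11 p12 lam : K} (hf : f ≠ 0)
    (hR : R ≠ 0) (hRsq : R ^ 2 = d ^ 2 + ds ^ 2) (heps : eps ^ 2 = 1)
    (hlam : lam = 1 + eps * R / f) (hp11 : p11 = -(eps * d * f / R))
    (hp12 : p12 = -(eps * ds * f / R)) :
    IsLagrangeSolution d (-d) ds f p11 (-p11) p12 lam := by
  subst hlam hp11 hp12
  refine ⟨?_, ?_, ?_, ?_⟩
  · field_simp
    linear_combination d * R * heps
  · field_simp
    linear_combination -(d * R) * heps
  · field_simp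
    linear_combination ds * R * heps
  · field_simp
    linear_combination -(d ^ 2 + ds ^ 2) * heps + hRsq

end

theorem sqrt_sq_add_sq_pos {x y : ℝ} (h : (x, y) ≠ (0, 0)) : 0 < Real.sqrt (x ^ 2 + y ^ 2) := by
  refine Real.sqrt_pos.mpr ?_
  by_contra! hle
  obtain ⟨hx, hy⟩ := (add_eq_zero_iff_of_nonneg (sq_nonneg x) (sq_nonneg y)).mp
    (le_antisymm hle (by positivity))
  exact h (by simp_all)

/-- Case 2, `λ ≠ ±1` solutions: with `d11 = d`, `d22 = −d`, `f > 0`,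
`(d, ds) ≠ (0, 0)` and `R = √(d² + ds²)`, setting `λ = 1 ± R/f`,
`p11 = ∓ d·f/R`, `p22 = −p11`, `p12 = ∓ ds·f/R` solves the Lagrange multiplier
system; in particular `p11·p22 − p12² = −f²`. -/
theorem case2_extra_solutions (d ds f eps R : ℝ)
    (hf : 0 < f) (hd : (d, ds) ≠ ((0 : ℝ), (0 : ℝ)))
    (hR : R = Real.sqrt (d ^ 2 + ds ^ 2)) (heps : eps = 1 ∨ eps = -1)
    (p11 p22 p12 lam : ℝ)
    (hlam : lam = 1 + eps * R / f)
    (hp11 : p11 = -(eps * d * f / R))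
    (hp22 : p22 = -p11)
    (hp12 : p12 = -(eps * ds * f / R)) :
    p11 + lam * p22 = d ∧
    lam * p11 + p22 = -d ∧
    (1 - lam) * p12 = ds ∧
    p11 * p22 - p12 ^ 2 = -f ^ 2 := by
  have hRpos : 0 < R := hR ▸ sqrt_sq_add_sq_pos hd
  have hRsq : R ^ 2 = d ^ 2 + ds ^ 2 := by
    rw [hR, Real.sq_sqrt (by positivity)]
  have heps_sq : eps ^ 2 = 1 := by rcases heps with rfl | rfl <;> norm_num
  subst hp22
  exact isLagrangeSolution_antidiagonal hf.ne' hRpos.ne' hRsq heps_sq hlam hp11 hp12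
end

section
/- Define u : ℝ² → ℝ by u(x₁,x₂) = x₁²/2 − x₁⁴·x₂/4 − x₂²/2 + x₁²·x₂³/2 − x₂⁵/20, and define f² : ℝ² → ℝ by f²(x₁,x₂) = x₁⁶ + 3·x₁⁴·x₂² + 3·x₁²·x₂·(x₂³ − 2) + (1 + x₂³)². Then u satisfies det(D²u)(x₁,x₂) + f²(x₁,x₂) = 0 at every point (x₁,x₂) ∈ ℝ², where det(D²u) = u_{x₁x₁}·u_{x₂x₂} − (u_{x₁x₂})². -/
/-- Second partial derivative in the first variable. -/
noncomputable def uxx (u : ℝ → ℝ → ℝ) (x y : ℝ) : ℝ :=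
  deriv (fun x' => deriv (fun x'' => u x'' y) x') x

/-- Second partial derivative in the second variable. -/
noncomputable def uyy (u : ℝ → ℝ → ℝ) (x y : ℝ) : ℝ :=
  deriv (fun y' => deriv (fun y'' => u x y'') y') y

/-- Mixed second partial derivative. -/
noncomputable def uxy (u : ℝ → ℝ → ℝ) (x y : ℝ) : ℝ :=
  deriv (fun x' => deriv (fun y' => u x' y') y) x

/-- Determinant of the Hessian matrix: `u_{x₁x₁}·u_{x₂x₂} − (u_{x₁x₂})²`. -/
noncomputable def hessDet (u : ℝ → ℝ → ℝ) (x y : ℝ) : ℝ :=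
  uxx u x y * uyy u x y - (uxy u x y) ^ 2

/-!
The Hessian of `u` is trace-free: `u_{x₁x₁} = -u_{x₂x₂} = a` and `u_{x₁x₂} = b`, where
`a + i b = 1 + (x₂ + i x₁)³`. Hence `det(D²u) = -(a² + b²) = -|1 + (x₂ + i x₁)³|²`, and expanding
this modulus gives `f²`.
-/

section SecondPartials

variable {u : ℝ → ℝ → ℝ} {x y a : ℝ}

theorem uxx_eq_of_hasDerivAt {p : ℝ → ℝ} (hu : ∀ x', HasDerivAt (fun x'' => u x'' y) (p x') x')
    (hp : HasDerivAt p a x) : uxx u x y = a := by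
  rw [uxx, funext fun x' => (hu x').deriv, hp.deriv]

theorem uyy_eq_of_hasDerivAt {q : ℝ → ℝ} (hu : ∀ y', HasDerivAt (fun y'' => u x y'') (q y') y')
    (hq : HasDerivAt q a y) : uyy u x y = a := by
  rw [uyy, funext fun y' => (hu y').deriv, hq.deriv]

theorem uxy_eq_of_hasDerivAt {q : ℝ → ℝ} (hu : ∀ x', HasDerivAt (fun y' => u x' y') (q x') y)
    (hq : HasDerivAt q a x) : uxy u x y = a := by
  rw [uxy, funext fun x' => (hu x').deriv, hq.deriv]

end SecondPartials

namespace InwardFold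

noncomputable def u (x₁ x₂ : ℝ) : ℝ :=
  x₁ ^ 2 / 2 - x₁ ^ 4 * x₂ / 4 - x₂ ^ 2 / 2 + x₁ ^ 2 * x₂ ^ 3 / 2 - x₂ ^ 5 / 20

theorem hasDerivAt_u_fst (x y : ℝ) :
    HasDerivAt (fun x' => u x' y) (x - x ^ 3 * y + x * y ^ 3) x := by
  refine HasDerivAt.congr_deriv
    ((((((hasDerivAt_pow 2 x).div_const 2).sub
      (((hasDerivAt_pow 4 x).mul_const y).div_const 4)).sub
      (hasDerivAt_const x (y ^ 2 / 2))).add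
      (((hasDerivAt_pow 2 x).mul_const (y ^ 3)).div_const 2)).sub
      (hasDerivAt_const x (y ^ 5 / 20))) ?_
  ring

theorem hasDerivAt_u_snd (x y : ℝ) :
    HasDerivAt (fun y' => u x y') (-(x ^ 4) / 4 - y + 3 * x ^ 2 * y ^ 2 / 2 - y ^ 4 / 4) y := by
  refine HasDerivAt.congr_deriv
    (((((hasDerivAt_const y (x ^ 2 / 2)).sub
      (((hasDerivAt_id y).const_mul (x ^ 4)).div_const 4)).sub
      ((hasDerivAt_pow 2 y).div_const 2)).add
      (((hasDerivAt_pow 3 y).const_mul (x ^ 2)).div_const 2)).sub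
      ((hasDerivAt_pow 5 y).div_const 20)) ?_
  ring

theorem uxx_u (x y : ℝ) : uxx u x y = 1 - 3 * x ^ 2 * y + y ^ 3 := by
  refine uxx_eq_of_hasDerivAt (hasDerivAt_u_fst · y) ?_
  refine HasDerivAt.congr_deriv
    (((hasDerivAt_id x).sub ((hasDerivAt_pow 3 x).mul_const y)).add
      ((hasDerivAt_id x).mul_const (y ^ 3))) ?_
  ring

theorem uyy_u (x y : ℝ) : uyy u x y = -1 + 3 * x ^ 2 * y - y ^ 3 := by
  refine uyy_eq_of_hasDerivAt (hasDerivAt_u_snd x) ?_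
  refine HasDerivAt.congr_deriv
    ((((hasDerivAt_const y (-(x ^ 4) / 4)).sub (hasDerivAt_id y)).add
      (((hasDerivAt_pow 2 y).const_mul (3 * x ^ 2)).div_const 2)).sub
      ((hasDerivAt_pow 4 y).div_const 4)) ?_
  ring

theorem uxy_u (x y : ℝ) : uxy u x y = -(x ^ 3) + 3 * x * y ^ 2 := by
  refine uxy_eq_of_hasDerivAt (hasDerivAt_u_snd · y) ?_
  refine HasDerivAt.congr_deriv
    (((((hasDerivAt_pow 4 x).neg.div_const 4).sub (hasDerivAt_const x y)).add
      ((((hasDerivAt_pow 2 x).const_mul 3).mul_const (y ^ 2)).div_const 2)).sub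
      (hasDerivAt_const x (y ^ 4 / 4))) ?_
  ring

theorem hessDet_u (x y : ℝ) :
    hessDet u x y = -((1 - 3 * x ^ 2 * y + y ^ 3) ^ 2 + (3 * x * y ^ 2 - x ^ 3) ^ 2) := by
  rw [hessDet, uxx_u, uyy_u, uxy_u]; ring

end InwardFold

/-- The inward-fold exact solution
`u(x₁,x₂) = x₁²/2 − x₁⁴x₂/4 − x₂²/2 + x₁²x₂³/2 − x₂⁵/20` satisfies
`det(D²u) + f² = 0` with
`f²(x₁,x₂) = x₁⁶ + 3x₁⁴x₂² + 3x₁²x₂(x₂³ − 2) + (1 + x₂³)²` everywhere. -/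
theorem inward_fold_exact_solution :
    ∀ x₁ x₂ : ℝ,
      hessDet (fun x₁ x₂ => x₁ ^ 2 / 2 - x₁ ^ 4 * x₂ / 4 - x₂ ^ 2 / 2
          + x₁ ^ 2 * x₂ ^ 3 / 2 - x₂ ^ 5 / 20) x₁ x₂
        + (x₁ ^ 6 + 3 * x₁ ^ 4 * x₂ ^ 2 + 3 * x₁ ^ 2 * x₂ * (x₂ ^ 3 - 2)
          + (1 + x₂ ^ 3) ^ 2) = 0 := by
  intro x₁ x₂
  show hessDet InwardFold.u x₁ x₂ + _ = 0
  rw [InwardFold.hessDet_u]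
  ring
end
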